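/- Let 0 < α < 2π. Then every λ ∈ ℂ with sin(λα) + λ sin α = 0 and Re λ > 0 satisfies Re λ > 1/2; in particular Re λ*(α) > 1/2. If moreover 0 < α < π, then every such λ satisfies Re λ > 1, so Re λ*(α) > 1. -/

import Mathlib

open MeasureTheory Real Set Complex Metric Topology Filter
open scoped ENNReal NNReal BigOperators

noncomputable section

/-- The plane. -/
abbrev E2 : Type := EuclideanSpace ℝ (Fin 2)
/-- The space of values of (complex) vector fields on the plane. -/
abbrev Cv : Type := EuclideanSpace ℂ (Fin 2)

/-- Standard basis vectors of the plane. -/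
def e2 (j : Fin 2) : E2 := EuclideanSpace.single j (1 : ℝ)

/-- The partial derivative `∂f/∂x_j`. -/
def pd {F : Type} [NormedAddCommGroup F] [NormedSpace ℝ F] (j : Fin 2) (f : E2 → F) :
    E2 → F := fun x => fderiv ℝ f x (e2 j)

/-- Divergence `∇·u` of a vector field. -/
def divV (u : E2 → Cv) : E2 → ℂ := fun x => ∑ j, pd j u x j

/-- Componentwise Laplacian. -/
def lapV {F : Type} [NormedAddCommGroup F] [NormedSpace ℝ F] (u : E2 → F) : E2 → F :=
  fun x => ∑ j, pd j (pd j u) x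

/-- Gradient of a scalar field, as a vector field. -/
def gradS (p : E2 → ℂ) : E2 → Cv := fun x => WithLp.toLp 2 (fun i => pd i p x)

/-- The parameter-dependent Stokes system
`s u − Δu − ∇(∇·u) + ∇p = f`, `−∇·u = g` on the set `Ω`. -/
def StokesOn (Ω : Set E2) (s : ℂ) (u : E2 → Cv) (p : E2 → ℂ) (f : E2 → Cv) (g : E2 → ℂ) :
    Prop :=
  (∀ x ∈ Ω, s • u x - lapV u x - gradS (divV u) x + gradS p x = f x) ∧
  (∀ x ∈ Ω, -(divV u x) = g x)

/-- The squared weighted Sobolev "integral" defining the `V_β^l` norm, with corners `P`. -/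
def Vint {F : Type} [NormedAddCommGroup F] [NormedSpace ℝ F] (Ω : Set E2) {n : ℕ}
    (P : Fin n → E2) (β : Fin n → ℝ) (l : ℕ) (u : E2 → F) : ℝ≥0∞ :=
  ∫⁻ x in Ω, ∑ k ∈ Finset.range (l + 1),
    ENNReal.ofReal ((∏ j, dist x (P j) ^ (2 * (β j - (l : ℝ) + (k : ℝ)))) *
      ‖iteratedFDeriv ℝ k u x‖ ^ 2)

/-- Membership in the weighted Sobolev space `V_β^l(Ω)`. -/
def MemV {F : Type} [NormedAddCommGroup F] [NormedSpace ℝ F] (Ω : Set E2) {n : ℕ}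
    (P : Fin n → E2) (β : Fin n → ℝ) (l : ℕ) (u : E2 → F) : Prop :=
  Vint Ω P β l u ≠ ⊤

/-- The weighted Sobolev norm `‖u‖_{V_β^l(Ω)}`. -/
def Vnorm {F : Type} [NormedAddCommGroup F] [NormedSpace ℝ F] (Ω : Set E2) {n : ℕ}
    (P : Fin n → E2) (β : Fin n → ℝ) (l : ℕ) (u : E2 → F) : ℝ :=
  Real.sqrt (Vint Ω P β l u).toReal

/-- The `L₂(Ω)` pairing `∫ g v̄`. -/
def pairL2 (Ω : Set E2) (g v : E2 → ℂ) : ℂ :=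
  ∫ x in Ω, g x * (starRingEnd ℂ) (v x)

/-- The `L₂(Ω)` pairing of vector fields. -/
def pairL2V (Ω : Set E2) (f v : E2 → Cv) : ℂ :=
  ∫ x in Ω, ∑ i, f x i * (starRingEnd ℂ) (v x i)

/-- Membership of (the functional generated by) `g` in the dual space `(V_{−β}^1(Ω))^*`. -/
def MemVdual (Ω : Set E2) {n : ℕ} (P : Fin n → E2) (β : Fin n → ℝ) (g : E2 → ℂ) : Prop :=
  ∃ C : ℝ, ∀ v : E2 → ℂ, MemV Ω P (fun j => -β j) 1 v →
    ‖pairL2 Ω g v‖ ≤ C * Vnorm Ω P (fun j => -β j) 1 v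

/-- The norm of `g` in the dual space `(V_{−β}^1(Ω))^*`. -/
def VdualNorm (Ω : Set E2) {n : ℕ} (P : Fin n → E2) (β : Fin n → ℝ) (g : E2 → ℂ) : ℝ :=
  sInf {C : ℝ | 0 ≤ C ∧ ∀ v : E2 → ℂ, MemV Ω P (fun j => -β j) 1 v →
    ‖pairL2 Ω g v‖ ≤ C * Vnorm Ω P (fun j => -β j) 1 v}

/-- The point with polar coordinates `(r, φ)`. -/
def polarPt (r φ : ℝ) : E2 :=
  WithLp.toLp 2 (fun i : Fin 2 => if i = 0 then r * Real.cos φ else r * Real.sin φ)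

/-- The plane angle (sector) `K` with aperture `α`. -/
def Kang (α : ℝ) : Set E2 := {x | ∃ r > 0, ∃ φ ∈ Ioo 0 α, x = polarPt r φ}

/-- The side `Γ₁ = {φ = 0}` of the angle. -/
def KangSide1 : Set E2 := {x | ∃ r > 0, x = polarPt r 0}

/-- The side `Γ₂ = {φ = α}` of the angle. -/
def KangSide2 (α : ℝ) : Set E2 := {x | ∃ r > 0, x = polarPt r α}

/-- The single corner (the vertex, at the origin) of the angle `K`. -/
def originCorner : Fin 1 → E2 := fun _ => 0

/-- `lam` is the solution of `sin(λα) + λ sin α = 0` with smallest positive real part. -/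
def IsLambdaStar (α : ℝ) (lam : ℂ) : Prop :=
  Complex.sin (lam * (α : ℂ)) + lam * Complex.sin (α : ℂ) = 0 ∧ 0 < lam.re ∧
  ∀ μ : ℂ, Complex.sin (μ * (α : ℂ)) + μ * Complex.sin (α : ℂ) = 0 → 0 < μ.re →
    lam.re ≤ μ.re

/-- A bounded polygonal domain in the plane with corners `corner j` of openings
`opening j`, near each of which the domain coincides with a plane angle. -/
structure PolygonalDomain (n : ℕ) where
  carrier : Set E2
  corner : Fin n → E2
  opening : Fin n → ℝ
  isOpen : IsOpen carrier
  bounded : Bornology.IsBounded carrier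
  connected : IsConnected carrier
  corner_injective : Function.Injective corner
  opening_mem : ∀ j, opening j ∈ Ioo 0 (2 * π)
  corner_mem : ∀ j, corner j ∈ frontier carrier
  angle_near : ∀ j, ∃ ε > 0, ∃ R : E2 ≃ₗᵢ[ℝ] E2, ∀ x ∈ ball (corner j) ε,
    (x ∈ carrier ↔ ∃ r > 0, ∃ φ ∈ Ioo 0 (opening j), x = corner j + R (polarPt r φ))

/-- The smooth part `Γ` of the boundary of a polygonal domain. -/
def PolygonalDomain.Gamma {n : ℕ} (D : PolygonalDomain n) : Set E2 :=
  frontier D.carrier \ Set.range D.corner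

/-- The squared (unweighted) Sobolev `W¹` integral. -/
def W1int {F : Type} [NormedAddCommGroup F] [NormedSpace ℝ F] (Ω : Set E2) (u : E2 → F) :
    ℝ≥0∞ :=
  ∫⁻ x in Ω, (ENNReal.ofReal (‖u x‖ ^ 2) + ENNReal.ofReal (‖fderiv ℝ u x‖ ^ 2))

/-- The Sobolev norm `‖u‖_{W¹(Ω)}`. -/
def W1norm {F : Type} [NormedAddCommGroup F] [NormedSpace ℝ F] (Ω : Set E2) (u : E2 → F) :
    ℝ := Real.sqrt (W1int Ω u).toReal

/-- Membership in the Sobolev space `W¹(Ω)`. -/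
def MemW1 {F : Type} [NormedAddCommGroup F] [NormedSpace ℝ F] (Ω : Set E2) (u : E2 → F) :
    Prop := W1int Ω u ≠ ⊤

/-- Membership in `W̊¹(Ω)`, the closure of `C₀^∞(Ω)` in `W¹(Ω)`. -/
def MemW10 {F : Type} [NormedAddCommGroup F] [NormedSpace ℝ F] (Ω : Set E2) (u : E2 → F) :
    Prop :=
  MemW1 Ω u ∧ ∀ δ > (0 : ℝ), ∃ v : E2 → F, ContDiff ℝ (⊤ : ℕ∞) v ∧ HasCompactSupport v ∧
    tsupport v ⊆ Ω ∧ W1norm Ω (u - v) < δ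

/-- The squared `L₂(Ω)` integral. -/
def L2int {F : Type} [NormedAddCommGroup F] (Ω : Set E2) (u : E2 → F) : ℝ≥0∞ :=
  ∫⁻ x in Ω, ENNReal.ofReal (‖u x‖ ^ 2)

/-- The `L₂(Ω)` norm. -/
def L2norm {F : Type} [NormedAddCommGroup F] (Ω : Set E2) (u : E2 → F) : ℝ :=
  Real.sqrt (L2int Ω u).toReal

/-- Membership in `L₂(Ω)`. -/
def MemL2 {F : Type} [NormedAddCommGroup F] (Ω : Set E2) (u : E2 → F) : Prop :=
  L2int Ω u ≠ ⊤

/-- The strain tensor `ε_{ij}(u) = (∂u_i/∂x_j + ∂u_j/∂x_i)/2`. -/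
def strain (u : E2 → Cv) (i j : Fin 2) : E2 → ℂ :=
  fun x => (pd j u x i + pd i u x j) / 2

/-- The sesquilinear form `b_s(u, v̄) = ∫_Ω (s u·v̄ + 2 Σ_{ij} ε_{ij}(u) ε_{ij}(v̄))`. -/
def bform (Ω : Set E2) (s : ℂ) (u v : E2 → Cv) : ℂ :=
  ∫ x in Ω, (s * ∑ i, u x i * (starRingEnd ℂ) (v x i) +
    2 * ∑ i, ∑ j, strain u i j x * (starRingEnd ℂ) (strain v i j x))

/-- An element of `W^{−1}(Ω)`: a bounded (conjugate-linear) functional on `W̊¹(Ω)`. -/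
structure Wm1 (Ω : Set E2) where
  toFun : (E2 → Cv) → ℂ
  map_add : ∀ v w, toFun (v + w) = toFun v + toFun w
  map_smul : ∀ (a : ℂ) (v), toFun (a • v) = (starRingEnd ℂ) a * toFun v
  bound : ∃ C : ℝ, ∀ v, MemW10 Ω v → ‖toFun v‖ ≤ C * W1norm Ω v

/-- The norm in `W^{−1}(Ω)`. -/
def Wm1norm (Ω : Set E2) (f : Wm1 Ω) : ℝ :=
  sInf {C : ℝ | 0 ≤ C ∧ ∀ v, MemW10 Ω v → ‖f.toFun v‖ ≤ C * W1norm Ω v}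

/-- `ν` is an outward unit normal vector to `Ω` at the boundary point `x`. -/
def IsOutwardNormal (Ω : Set E2) (x ν : E2) : Prop :=
  ‖ν‖ = 1 ∧ ∃ ε > (0 : ℝ), ∀ t ∈ Ioo (0 : ℝ) ε, x + t • ν ∉ closure Ω ∧ x - t • ν ∈ Ω

/-- Weak solution of the parameter-dependent Stokes system in `W̊¹(Ω) × L̊₂(Ω)`. -/
def WeakStokes {n : ℕ} (D : PolygonalDomain n) (s : ℂ) (u : E2 → Cv) (p : E2 → ℂ)
    (f : E2 → Cv) (g : E2 → ℂ) : Prop :=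
  MemW10 D.carrier u ∧ MemL2 D.carrier p ∧ (∫ x in D.carrier, p x) = 0 ∧
  (∀ v : E2 → Cv, MemW10 D.carrier v →
    bform D.carrier s u v - (∫ x in D.carrier, p x * (starRingEnd ℂ) (divV v x)) =
      pairL2V D.carrier f v) ∧
  (∀ x ∈ D.carrier, -(divV u x) = g x)

/-- The weighted `L₂` norm on the smooth boundary part `Γ` (w.r.t. 1-dim Hausdorff measure). -/
def VnormGamma {n : ℕ} (D : PolygonalDomain n) (β : Fin n → ℝ) {F : Type}
    [NormedAddCommGroup F] (v : E2 → F) : ℝ :=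
  Real.sqrt (∫⁻ x in D.Gamma,
    ENNReal.ofReal ((∏ j, dist x (D.corner j) ^ (2 * β j)) * ‖v x‖ ^ 2) ∂μH[1]).toReal

/-- The weighted boundary norm `‖Du‖_{V_{γ−1/2}^0(Γ)}` of the matrix `Du = (∂u_j/∂x_i)`. -/
def DuNormGamma {n : ℕ} (D : PolygonalDomain n) (γ : Fin n → ℝ) (u : E2 → Cv) : ℝ :=
  Real.sqrt (∫⁻ x in D.Gamma,
    ENNReal.ofReal ((∏ j, dist x (D.corner j) ^ (2 * (γ j - 1 / 2))) *
      ∑ i, ∑ k, ‖pd i u x k‖ ^ 2) ∂μH[1]).toReal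

/-- Time derivative of a time-dependent function. -/
def tderiv {F : Type} [NormedAddCommGroup F] [NormedSpace ℝ F] (u : ℝ → E2 → F) :
    ℝ → E2 → F := fun t x => deriv (fun τ => u τ x) t

/-- The squared `L₂(J; V_β^l(Ω))` integral. -/
def VintT {F : Type} [NormedAddCommGroup F] [NormedSpace ℝ F] (J : Set ℝ) (Ω : Set E2)
    {n : ℕ} (P : Fin n → E2) (β : Fin n → ℝ) (l : ℕ) (u : ℝ → E2 → F) : ℝ≥0∞ :=
  ∫⁻ t in J, Vint Ω P β l (u t)

/-- The norm of `L₂(J; V_β^l(Ω))`. -/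
def VnormT {F : Type} [NormedAddCommGroup F] [NormedSpace ℝ F] (J : Set ℝ) (Ω : Set E2)
    {n : ℕ} (P : Fin n → E2) (β : Fin n → ℝ) (l : ℕ) (u : ℝ → E2 → F) : ℝ :=
  Real.sqrt (VintT J Ω P β l u).toReal

/-- Multiplication of a time-dependent function by the weight `e^{−γ t}`. -/
def expw {F : Type} [NormedAddCommGroup F] [NormedSpace ℝ F] (γ : ℝ) (u : ℝ → E2 → F) :
    ℝ → E2 → F := fun t x => Real.exp (-γ * t) • u t x

/-- The squared `W_β^{2,1}(Ω × J)` integral. -/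
def W21int {F : Type} [NormedAddCommGroup F] [NormedSpace ℝ F] (J : Set ℝ) (Ω : Set E2)
    {n : ℕ} (P : Fin n → E2) (β : Fin n → ℝ) (u : ℝ → E2 → F) : ℝ≥0∞ :=
  VintT J Ω P β 2 u + VintT J Ω P β 0 (tderiv u)

/-- Membership in `W̊_β^{2,1}(Ω × J)` (with zero initial value). -/
def MemW21 {F : Type} [NormedAddCommGroup F] [NormedSpace ℝ F] (J : Set ℝ) (Ω : Set E2)
    {n : ℕ} (P : Fin n → E2) (β : Fin n → ℝ) (u : ℝ → E2 → F) : Prop :=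
  W21int J Ω P β u ≠ ⊤ ∧ ∀ x ∈ Ω, u 0 x = 0

/-- The norm of `W_β^{2,1}(Ω × J)`. -/
def W21norm {F : Type} [NormedAddCommGroup F] [NormedSpace ℝ F] (J : Set ℝ) (Ω : Set E2)
    {n : ℕ} (P : Fin n → E2) (β : Fin n → ℝ) (u : ℝ → E2 → F) : ℝ :=
  Real.sqrt (W21int J Ω P β u).toReal

/-- The squared `W_β^{1,1}(Ω × J)` integral. -/
def W11int (J : Set ℝ) (Ω : Set E2) {n : ℕ} (P : Fin n → E2) (β : Fin n → ℝ)
    (g : ℝ → E2 → ℂ) : ℝ≥0∞ :=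
  VintT J Ω P β 1 g + ∫⁻ t in J, ENNReal.ofReal ((VdualNorm Ω P β (tderiv g t)) ^ 2)

/-- Membership in `W̊_β^{1,1}(Ω × J)` (with zero initial value). -/
def MemW11 (J : Set ℝ) (Ω : Set E2) {n : ℕ} (P : Fin n → E2) (β : Fin n → ℝ)
    (g : ℝ → E2 → ℂ) : Prop :=
  W11int J Ω P β g ≠ ⊤ ∧ (∀ᵐ t ∂(volume.restrict J), MemVdual Ω P β (tderiv g t)) ∧
  ∀ x ∈ Ω, g 0 x = 0

/-- The norm of `W_β^{1,1}(Ω × J)`. -/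
def W11norm (J : Set ℝ) (Ω : Set E2) {n : ℕ} (P : Fin n → E2) (β : Fin n → ℝ)
    (g : ℝ → E2 → ℂ) : ℝ :=
  Real.sqrt (W11int J Ω P β g).toReal

/-- The nonstationary Stokes system with Dirichlet boundary condition on `Γb` and zero
initial condition, on the time interval `J`. -/
def StokesEvol (Ω Γb : Set E2) (J : Set ℝ) (u : ℝ → E2 → Cv) (p : ℝ → E2 → ℂ)
    (f : ℝ → E2 → Cv) (g : ℝ → E2 → ℂ) : Prop :=
  (∀ t ∈ J, ∀ x ∈ Ω,
    tderiv u t x - lapV (u t) x - gradS (divV (u t)) x + gradS (p t) x = f t x) ∧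
  (∀ t ∈ J, ∀ x ∈ Ω, -(divV (u t) x) = g t x) ∧
  (∀ t ∈ J, ∀ x ∈ Γb, u t x = 0) ∧
  (∀ x ∈ Ω, u 0 x = 0)

/-- The Laplace transform in time. -/
def laplaceT (u : ℝ → E2 → ℂ) (s : ℂ) : E2 → ℂ :=
  fun x => ∫ t in Ioi (0 : ℝ), Complex.exp (-(s * (t : ℂ))) * u t x

/-- Holomorphy in the half-plane `Re s > γ` (pointwise in `x ∈ Ω`). -/
def HoloOn (Ω : Set E2) (γ : ℝ) (U : ℂ → E2 → ℂ) : Prop :=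
  ∀ x ∈ Ω, DifferentiableOn ℂ (fun s => U s x) {s : ℂ | γ < s.re}

/-- The line integral `(1/i)∫_{Re s = σ} ‖U(s)‖²_{V_β^0} ds`. -/
def lineInt0 (Ω : Set E2) {n : ℕ} (P : Fin n → E2) (β : Fin n → ℝ) (U : ℂ → E2 → ℂ)
    (σ : ℝ) : ℝ≥0∞ :=
  ∫⁻ τ : ℝ, Vint Ω P β 0 (U (σ + τ * Complex.I))

/-- The squared `H_β(Ω, γ)` norm. -/
def H0int (Ω : Set E2) {n : ℕ} (P : Fin n → E2) (β : Fin n → ℝ) (γ : ℝ) (U : ℂ → E2 → ℂ) :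
    ℝ≥0∞ := ⨆ σ ∈ Ioi γ, lineInt0 Ω P β U σ

def MemH0 (Ω : Set E2) {n : ℕ} (P : Fin n → E2) (β : Fin n → ℝ) (γ : ℝ) (U : ℂ → E2 → ℂ) :
    Prop := HoloOn Ω γ U ∧ H0int Ω P β γ U ≠ ⊤

def H0norm (Ω : Set E2) {n : ℕ} (P : Fin n → E2) (β : Fin n → ℝ) (γ : ℝ) (U : ℂ → E2 → ℂ) :
    ℝ := Real.sqrt (H0int Ω P β γ U).toReal

/-- The line integral for the `H_β^1(Ω, γ)` norm. -/
def lineInt1 (Ω : Set E2) {n : ℕ} (P : Fin n → E2) (β : Fin n → ℝ) (U : ℂ → E2 → ℂ)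
    (σ : ℝ) : ℝ≥0∞ :=
  ∫⁻ τ : ℝ, (Vint Ω P β 1 (U (σ + τ * Complex.I)) +
    ENNReal.ofReal (‖(σ : ℂ) + τ * Complex.I‖ ^ 2 *
      (VdualNorm Ω P β (U (σ + τ * Complex.I))) ^ 2))

/-- The squared `H_β^1(Ω, γ)` norm. -/
def H1int (Ω : Set E2) {n : ℕ} (P : Fin n → E2) (β : Fin n → ℝ) (γ : ℝ) (U : ℂ → E2 → ℂ) :
    ℝ≥0∞ := ⨆ σ ∈ Ioi γ, lineInt1 Ω P β U σ

def MemH1 (Ω : Set E2) {n : ℕ} (P : Fin n → E2) (β : Fin n → ℝ) (γ : ℝ) (U : ℂ → E2 → ℂ) :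
    Prop :=
  HoloOn Ω γ U ∧ H1int Ω P β γ U ≠ ⊤ ∧ ∀ s : ℂ, γ < s.re → MemVdual Ω P β (U s)

def H1norm (Ω : Set E2) {n : ℕ} (P : Fin n → E2) (β : Fin n → ℝ) (γ : ℝ) (U : ℂ → E2 → ℂ) :
    ℝ := Real.sqrt (H1int Ω P β γ U).toReal

/-- The line integral for the `H_β^2(Ω, γ)` norm. -/
def lineInt2 (Ω : Set E2) {n : ℕ} (P : Fin n → E2) (β : Fin n → ℝ) (U : ℂ → E2 → ℂ)
    (σ : ℝ) : ℝ≥0∞ :=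
  ∫⁻ τ : ℝ, (Vint Ω P β 2 (U (σ + τ * Complex.I)) +
    ENNReal.ofReal (‖(σ : ℂ) + τ * Complex.I‖ ^ 2) * Vint Ω P β 0 (U (σ + τ * Complex.I)))

/-- The squared `H_β^2(Ω, γ)` norm. -/
def H2int (Ω : Set E2) {n : ℕ} (P : Fin n → E2) (β : Fin n → ℝ) (γ : ℝ) (U : ℂ → E2 → ℂ) :
    ℝ≥0∞ := ⨆ σ ∈ Ioi γ, lineInt2 Ω P β U σ

def MemH2 (Ω : Set E2) {n : ℕ} (P : Fin n → E2) (β : Fin n → ℝ) (γ : ℝ) (U : ℂ → E2 → ℂ) :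
    Prop := HoloOn Ω γ U ∧ H2int Ω P β γ U ≠ ⊤

def H2norm (Ω : Set E2) {n : ℕ} (P : Fin n → E2) (β : Fin n → ℝ) (γ : ℝ) (U : ℂ → E2 → ℂ) :
    ℝ := Real.sqrt (H2int Ω P β γ U).toReal

private lemma normSq_sin' (z : ℂ) :
    Complex.normSq (Complex.sin z) = Real.sin z.re ^ 2 + Real.sinh z.im ^ 2 := by
  have h : Complex.sin z =
      (Real.sin z.re * Real.cosh z.im : ℝ) + (Real.cos z.re * Real.sinh z.im : ℝ) * Complex.I := by
    conv_lhs => rw [← Complex.re_add_im z]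
    rw [Complex.sin_add, Complex.cos_mul_I, Complex.sin_mul_I]
    push_cast
    ring
  rw [h, Complex.normSq_add_mul_I]
  nlinarith [Real.sin_sq_add_cos_sq z.re, Real.cosh_sq z.im]

private lemma sin_smul_ge (c t : ℝ) (hc0 : 0 ≤ c) (hc1 : c ≤ 1) (ht0 : 0 ≤ t) (htπ : t ≤ π) :
    c * Real.sin t ≤ Real.sin (c * t) := by
  have := strictConcaveOn_sin_Icc.concaveOn.2 (mem_Icc.2 ⟨le_refl 0, Real.pi_pos.le⟩)
    (mem_Icc.2 ⟨ht0, htπ⟩) (show (0:ℝ) ≤ 1 - c by linarith) hc0 (by ring)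
  simpa using this

private lemma sq_le_sinh_sq (b : ℝ) : b ^ 2 ≤ Real.sinh b ^ 2 := by
  rcases lt_trichotomy b 0 with h | h | h
  · nlinarith [Real.sinh_lt_self_iff.2 h]
  · simp [h]
  · nlinarith [Real.self_lt_sinh_iff.2 h]

private lemma sq_lt_sinh_sq {b : ℝ} (hb : b ≠ 0) : b ^ 2 < Real.sinh b ^ 2 := by
  rcases lt_trichotomy b 0 with h | h | h
  · nlinarith [Real.sinh_lt_self_iff.2 h]
  · exact absurd h hb
  · nlinarith [Real.self_lt_sinh_iff.2 h]

/-- The modulus identity derived from the eigenvalue equation. -/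
private lemma key_eq {α : ℝ} {lam : ℂ}
    (heq : Complex.sin (lam * (α : ℂ)) + lam * Complex.sin (α : ℂ) = 0) :
    Real.sin (lam.re * α) ^ 2 + Real.sinh (lam.im * α) ^ 2
      = (lam.re ^ 2 + lam.im ^ 2) * Real.sin α ^ 2 := by
  have h1 : Complex.sin (lam * (α : ℂ)) = -(lam * Complex.sin (α : ℂ)) := by
    linear_combination heq
  have h2 := congrArg Complex.normSq h1
  rw [normSq_sin', Complex.normSq_neg, map_mul, ← Complex.ofReal_sin,
    Complex.normSq_ofReal] at h2
  simp only [Complex.mul_re, Complex.mul_im, Complex.ofReal_re, Complex.ofReal_im,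
    mul_zero, zero_mul, sub_zero, add_zero, zero_add] at h2
  rw [h2, Complex.normSq_apply]
  ring

private lemma abs_sin_le_self {α : ℝ} (h0 : 0 < α) : |Real.sin α| ≤ α := by
  rcases le_or_gt 1 α with h | h
  · calc |Real.sin α| ≤ 1 := Real.abs_sin_le_one α
      _ ≤ α := h
  · have hπ : α < π := lt_of_lt_of_le h (by nlinarith [Real.pi_gt_three])
    rw [_root_.abs_of_nonneg (Real.sin_nonneg_of_nonneg_of_le_pi h0.le hπ.le)]
    exact (Real.sin_lt h0).le

/-- Core estimate: any root with positive real part has real part > 1/2, for 0 < α < 2π. -/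
private lemma core_half {α : ℝ} (h0 : 0 < α) (h2 : α < 2 * π) {lam : ℂ}
    (heq : Complex.sin (lam * (α : ℂ)) + lam * Complex.sin (α : ℂ) = 0)
    (hre : 0 < lam.re) : 1 / 2 < lam.re := by
  by_contra hx
  push_neg at hx
  set x := lam.re with hxdef
  set y := lam.im with hydef
  have hE := key_eq heq
  -- the half-angle
  have hs2 : 0 < Real.sin (α / 2) := Real.sin_pos_of_pos_of_lt_pi (by linarith) (by linarith)
  have hcos2 : Real.cos (α / 2) ^ 2 < 1 := by
    nlinarith [Real.sin_sq_add_cos_sq (α / 2)]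
  have hcos : |Real.cos (α / 2)| < 1 := (sq_lt_one_iff_abs_lt_one _).1 hcos2
  have hsinle : |Real.sin α| < 2 * Real.sin (α / 2) := by
    have hα : Real.sin α = 2 * Real.sin (α / 2) * Real.cos (α / 2) := by
      have := Real.sin_two_mul (α / 2)
      rw [show 2 * (α / 2) = α by ring] at this
      exact this
    calc |Real.sin α| = 2 * Real.sin (α / 2) * |Real.cos (α / 2)| := by
          rw [hα, _root_.abs_mul, _root_.abs_of_pos (by positivity)]
      _ < 2 * Real.sin (α / 2) * 1 := by
          exact mul_lt_mul_of_pos_left hcos (by positivity)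
      _ = 2 * Real.sin (α / 2) := mul_one _
  have hA : x * |Real.sin α| < Real.sin (x * α) := by
    calc x * |Real.sin α| < x * (2 * Real.sin (α / 2)) :=
          mul_lt_mul_of_pos_left hsinle hre
      _ = (2 * x) * Real.sin (α / 2) := by ring
      _ ≤ Real.sin ((2 * x) * (α / 2)) :=
          sin_smul_ge (2 * x) (α / 2) (by linarith) (by linarith) (by linarith) (by linarith)
      _ = Real.sin (x * α) := by ring_nf
  have hA2 : x ^ 2 * Real.sin α ^ 2 < Real.sin (x * α) ^ 2 := by
    have h0' : 0 ≤ x * |Real.sin α| := by positivity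
    nlinarith [_root_.sq_abs (Real.sin α)]
  have hB : y ^ 2 * Real.sin α ^ 2 ≤ Real.sinh (y * α) ^ 2 := by
    have hs : Real.sin α ^ 2 ≤ α ^ 2 := by
      rcases abs_le.1 (abs_sin_le_self h0) with ⟨ha, hb⟩
      exact sq_le_sq' ha hb
    have h1 : y ^ 2 * Real.sin α ^ 2 ≤ (y * α) ^ 2 := by
      calc y ^ 2 * Real.sin α ^ 2 ≤ y ^ 2 * α ^ 2 :=
            mul_le_mul_of_nonneg_left hs (sq_nonneg y)
        _ = (y * α) ^ 2 := by ring
    exact h1.trans (sq_le_sinh_sq _)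
  linarith

/-- Core estimate: any root with positive real part has real part > 1, for 0 < α < π. -/
private lemma core_one {α : ℝ} (h0 : 0 < α) (hπ : α < π) {lam : ℂ}
    (heq : Complex.sin (lam * (α : ℂ)) + lam * Complex.sin (α : ℂ) = 0)
    (hre : 0 < lam.re) : 1 < lam.re := by
  by_contra hx
  push_neg at hx
  have hsα : 0 < Real.sin α := Real.sin_pos_of_pos_of_lt_pi h0 hπ
  by_cases him : lam.im = 0
  · -- real root: impossible
    have hl : lam = ((lam.re : ℝ) : ℂ) := Complex.ext rfl (by simp [him])
    rw [hl] at heq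
    have heqR : Real.sin (lam.re * α) + lam.re * Real.sin α = 0 := by
      have : ((Real.sin (lam.re * α) + lam.re * Real.sin α : ℝ) : ℂ) = 0 := by
        push_cast [Complex.ofReal_sin]
        convert heq using 3 <;> push_cast <;> ring
      exact_mod_cast this
    have hnn : 0 ≤ Real.sin (lam.re * α) :=
      Real.sin_nonneg_of_nonneg_of_le_pi (by positivity) (by nlinarith)
    nlinarith [mul_pos hre hsα]
  · have hE := key_eq heq
    set x := lam.re
    set y := lam.im
    have hA : x ^ 2 * Real.sin α ^ 2 ≤ Real.sin (x * α) ^ 2 := by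
      have h1 : x * Real.sin α ≤ Real.sin (x * α) :=
        sin_smul_ge x α hre.le hx h0.le hπ.le
      nlinarith [mul_pos hre hsα]
    have hB : y ^ 2 * Real.sin α ^ 2 < Real.sinh (y * α) ^ 2 := by
      have h1 : y ^ 2 * Real.sin α ^ 2 < (y * α) ^ 2 := by
        have hy2 : 0 < y ^ 2 := by positivity
        have hs : Real.sin α ^ 2 < α ^ 2 := by
          have := Real.sin_lt h0
          nlinarith
        calc y ^ 2 * Real.sin α ^ 2 < y ^ 2 * α ^ 2 :=
              mul_lt_mul_of_pos_left hs hy2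
          _ = (y * α) ^ 2 := by ring
      exact h1.trans_le (sq_le_sinh_sq _)
    linarith

/-- every solution of `sin(λα) + λ sin α = 0` with positive real part has
real part `> 1/2` for `0 < α < 2π` (in particular `Re λ*(α) > 1/2`), and real part `> 1`
for `0 < α < π` (in particular `Re λ*(α) > 1`). -/
theorem stmt_13 (α : ℝ) (h0 : 0 < α) (h2 : α < 2 * π) :
    (∀ lam : ℂ, Complex.sin (lam * (α : ℂ)) + lam * Complex.sin (α : ℂ) = 0 →
      0 < lam.re → 1 / 2 < lam.re) ∧
    (∀ lam : ℂ, IsLambdaStar α lam → 1 / 2 < lam.re) ∧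
    (α < π →
      (∀ lam : ℂ, Complex.sin (lam * (α : ℂ)) + lam * Complex.sin (α : ℂ) = 0 →
        0 < lam.re → 1 < lam.re) ∧
      (∀ lam : ℂ, IsLambdaStar α lam → 1 < lam.re)) := by
  refine ⟨fun lam heq hre => core_half h0 h2 heq hre,
    fun lam hls => core_half h0 h2 hls.1 hls.2.1, fun hπ =>
    ⟨fun lam heq hre => core_one h0 hπ heq hre,
     fun lam hls => core_one h0 hπ hls.1 hls.2.1⟩⟩

end
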